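/- For every ς > −53/3 and every t ∈ ℝ, P^d(ς) ≤ g(t), where P^d(ς) = (1/12)(−ς²−18ς−81) − ((8ς/3)+56)²/(4(ς+53/3)) − 2ς and g(t) = 30+t²(18−16t+3t²) (weak duality between the primal g and its canonical dual). -/

import Mathlib

/-!
Both sides are separated by the value `3`, which is the global minimum of `g` (attained at
`t = 3`) and the maximum of `Pᵈ` on `ς > -53/3` (attained at `ς = -15`); each gap factors with
a squared factor vanishing at these critical points.
-/

noncomputable def PdGP (ς : ℝ) : ℝ :=
  (1/12) * (-ς^2 - 18*ς - 81) - ((8*ς/3) + 56)^2 / (4 * (ς + 53/3)) - 2*ς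

noncomputable def gGP (t : ℝ) : ℝ := 30 + t^2 * (18 - 16*t + 3*t^2)

lemma three_sub_PdGP {ς : ℝ} (hς : 3 * ς + 53 ≠ 0) :
    3 - PdGP ς = (ς + 15)^2 * (ς + 51) / (4 * (3 * ς + 53)) := by
  have hς' : ς + 53/3 ≠ 0 := fun h => hς (by linarith)
  unfold PdGP
  field_simp
  ring

lemma gGP_sub_three (t : ℝ) : gGP t - 3 = (t - 3)^2 * (3 * t^2 + 2 * t + 3) := by
  unfold gGP
  ring

lemma PdGP_le_three {ς : ℝ} (hς : -53/3 < ς) : PdGP ς ≤ 3 := by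
  have hpos : 0 < 3 * ς + 53 := by linarith
  have hgap : 0 ≤ 3 - PdGP ς := by
    rw [three_sub_PdGP hpos.ne']
    have : 0 ≤ ς + 51 := by linarith
    positivity
  linarith

lemma three_le_gGP (t : ℝ) : 3 ≤ gGP t := by
  have hquad : 0 < 3 * t^2 + 2 * t + 3 := by nlinarith [sq_nonneg (t + 1), sq_nonneg t]
  have hgap : 0 ≤ gGP t - 3 := by
    rw [gGP_sub_three]
    positivity
  linarith

theorem stmt_13 : ∀ ς t : ℝ, ς > -53/3 → PdGP ς ≤ gGP t :=
  fun _ t hς => (PdGP_le_three hς).trans (three_le_gGP t)
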